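/- Suppose q_m > 0, and let f_∞ ∈ ℝ^m be given by f_∞^s = Q_s / (Σ_{s'=1}^m Q_{s'}). Then for every vector f_0 ∈ ℝ^m with nonnegative entries summing to 1, the iterates A^t f_0 converge to f_∞ as t → ∞; i.e., the stationary distribution is a global attractor of the dynamics f_{t+1} = A f_t on the simplex. -/

import Mathlib

/-- The transition matrix of the exogenous innovation–imitation model
(0-indexed: level `i : Fin m` corresponds to productivity level `i+1`). -/
def transMatrix (m : ℕ) (a : ℝ) (q : Fin m → ℝ) : Matrix (Fin m) (Fin m) ℝ :=
  fun i j =>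
    (if (j : ℕ) = 0 then q i * (1 - a) else 0) +
    (if i = j then a else 0) +
    (if (j : ℕ) = (i : ℕ) + 1 then 1 - a else 0)

/-- `Q_s = q_s + q_{s+1} + ⋯ + q_m` (0-indexed). -/
def tailQ (m : ℕ) (q : Fin m → ℝ) (s : Fin m) : ℝ := ∑ j ∈ Finset.Ici s, q j

/-!
The matrix `A` is column-stochastic and fixes the vector `(Q_s)_s`, since `Q_s = q_s + Q_{s+1}`
and `Q_1 = 1`. Row `1` of `A ^ m` is bounded below by `δ = min(a, 1 - a) ^ m`: from level `1`
every level is reached within `m` steps. By Doeblin's argument `A ^ m` then contracts the `ℓ¹`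
norm of vectors of total mass zero by the factor `1 - δ`, so `A ^ t f₀ - f_∞ → 0`.
-/

open Filter Topology

namespace Matrix

variable {n : Type*} [Fintype n] {M : Matrix n n ℝ}

theorem sum_abs_mulVec_le_of_nonneg (hM : ∀ i j, 0 ≤ M i j) {s : ℝ}
    (hcol : ∀ j, ∑ i, M i j ≤ s) (v : n → ℝ) :
    ∑ i, |(M *ᵥ v) i| ≤ s * ∑ j, |v j| :=
  calc ∑ i, |(M *ᵥ v) i| ≤ ∑ i, ∑ j, M i j * |v j| := by
        gcongr with i
        refine (Finset.abs_sum_le_sum_abs _ _).trans_eq ?_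
        simp only [abs_mul, abs_of_nonneg (hM _ _)]
    _ = ∑ j, (∑ i, M i j) * |v j| := by
        rw [Finset.sum_comm]; simp only [Finset.sum_mul]
    _ ≤ ∑ j, s * |v j| := by gcongr with j; exact hcol j
    _ = s * ∑ j, |v j| := by rw [Finset.mul_sum]

theorem mul_apply_le_of_nonneg {P Q : Matrix n n ℝ}
    (hP : ∀ i j, 0 ≤ P i j) (hQ : ∀ i j, 0 ≤ Q i j) (i l j : n) :
    P i l * Q l j ≤ (P * Q) i j :=
  Finset.single_le_sum (f := fun l => P i l * Q l j) (fun l _ => mul_nonneg (hP i l) (hQ l j))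
    (Finset.mem_univ l)

variable [DecidableEq n]

theorem sum_abs_mulVec_le_of_mem_colStochastic (hM : M ∈ colStochastic ℝ n) (v : n → ℝ) :
    ∑ i, |(M *ᵥ v) i| ≤ ∑ i, |v i| := by
  simpa using sum_abs_mulVec_le_of_nonneg (fun _ _ => nonneg_of_mem_colStochastic hM)
    (fun j => (sum_col_of_mem_colStochastic hM j).le) v

theorem sum_abs_mulVec_le_of_mem_colStochastic_of_sum_eq_zero (hM : M ∈ colStochastic ℝ n)
    {δ : ℝ} {i₀ : n} (hrow : ∀ j, δ ≤ M i₀ j) {v : n → ℝ} (hv : ∑ j, v j = 0) :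
    ∑ i, |(M *ᵥ v) i| ≤ (1 - δ) * ∑ j, |v j| := by
  -- removing the mass `δ` from row `i₀` does not change `M *ᵥ v`, but lowers each column sum
  set N : Matrix n n ℝ := vecMulVec (Pi.single i₀ δ) 1
  have hNv : N *ᵥ v = 0 := by
    ext i
    simp [N, mulVec, dotProduct, ← Finset.mul_sum, hv]
  have hMv : M *ᵥ v = (M - N) *ᵥ v := by rw [sub_mulVec, hNv, sub_zero]
  rw [hMv]
  refine sum_abs_mulVec_le_of_nonneg (fun i j => ?_) (fun j => ?_) v
  · by_cases h : i = i₀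
    · subst h; simpa [N, vecMulVec_apply] using hrow j
    · simpa [N, vecMulVec_apply, h] using nonneg_of_mem_colStochastic hM
  · simp [N, Finset.sum_sub_distrib, sum_col_of_mem_colStochastic hM]

theorem pow_mulVec_eq_self {x : n → ℝ} (hx : M *ᵥ x = x) (t : ℕ) : (M ^ t) *ᵥ x = x := by
  induction t with
  | zero => simp
  | succ t ih => rw [pow_succ, ← mulVec_mulVec, hx, ih]

theorem tendsto_pow_mulVec_of_mem_colStochastic (hM : M ∈ colStochastic ℝ n) {k : ℕ} {δ : ℝ}
    (hδ : 0 < δ) {i₀ : n} (hrow : ∀ j, δ ≤ (M ^ k) i₀ j) {x : n → ℝ} (hx : M *ᵥ x = x)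
    {f : n → ℝ} (hf : ∑ i, f i = ∑ i, x i) :
    Tendsto (fun t : ℕ => (M ^ t) *ᵥ f) atTop (𝓝 x) := by
  set v : ℕ → n → ℝ := fun t => (M ^ t) *ᵥ (f - x)
  set N : ℕ → ℝ := fun t => ∑ i, |v t i|
  have hN_nonneg : ∀ t, 0 ≤ N t := fun t => Finset.sum_nonneg fun i _ => abs_nonneg _
  have hv_sum : ∀ t, ∑ i, v t i = 0 := fun t => by
    simp [v, sum_mulVec_of_mem_colStochastic (pow_mem hM t), Finset.sum_sub_distrib, hf]
  have hN_anti : Antitone N := antitone_nat_of_succ_le fun t => by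
    simpa [N, v, pow_succ', ← mulVec_mulVec] using
      sum_abs_mulVec_le_of_mem_colStochastic hM (v t)
  have hN_contract : ∀ t, N (t + k) ≤ (1 - δ) * N t := fun t => by
    simpa [N, v, add_comm t k, pow_add, ← mulVec_mulVec] using
      sum_abs_mulVec_le_of_mem_colStochastic_of_sum_eq_zero (pow_mem hM k) hrow (hv_sum t)
  have hN_lim : Tendsto N atTop (𝓝 0) := by
    have hL := tendsto_atTop_ciInf hN_anti ⟨0, Set.forall_mem_range.2 hN_nonneg⟩
    have hL_nonneg : 0 ≤ ⨅ t, N t := le_ciInf hN_nonneg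
    have hL_le : ⨅ t, N t ≤ (1 - δ) * ⨅ t, N t :=
      le_of_tendsto_of_tendsto' (hL.comp (tendsto_add_atTop_nat k)) (hL.const_mul _) hN_contract
    rwa [show ⨅ t, N t = 0 by nlinarith] at hL
  have hv_lim : Tendsto v atTop (𝓝 0) := by
    refine squeeze_zero_norm
      (fun t => (pi_norm_le_iff_of_nonneg (hN_nonneg t)).2 fun i => ?_) hN_lim
    exact Finset.single_le_sum (f := fun i => |v t i|) (fun i _ => abs_nonneg _)
      (Finset.mem_univ i)
  have hv_eq : ∀ t, (M ^ t) *ᵥ f = x + v t := fun t => by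
    simp [v, mulVec_sub, pow_mulVec_eq_self hx]
  simpa [hv_eq] using hv_lim.const_add x

end Matrix

section TransMatrix

open Matrix

variable {m : ℕ} {a : ℝ} {q : Fin m → ℝ}

theorem transMatrix_nonneg (ha₀ : 0 ≤ a) (ha₁ : a ≤ 1) (hq : ∀ i, 0 ≤ q i) (i j : Fin m) :
    0 ≤ transMatrix m a q i j := by
  have := mul_nonneg (hq i) (sub_nonneg.2 ha₁)
  unfold transMatrix
  split_ifs <;> linarith

theorem sum_transMatrix_apply (hqsum : ∑ i, q i = 1) (j : Fin m) :
    ∑ i, transMatrix m a q i j = 1 := by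
  simp only [transMatrix, Finset.sum_add_distrib, Finset.sum_ite_eq', Finset.mem_univ, if_true]
  rcases Nat.eq_zero_or_eq_succ_pred j with hj | hj
  · simp [hj, ← Finset.sum_mul, hqsum]
  · have hlt : (j : ℕ) - 1 < m := by omega
    rw [Finset.sum_eq_single_of_mem
      (f := fun i : Fin m => if (j : ℕ) = i + 1 then 1 - a else 0) ⟨(j : ℕ) - 1, hlt⟩
      (Finset.mem_univ _) fun i _ hi => if_neg fun h => hi (Fin.ext (by simp; omega))]
    simp [show (j : ℕ) ≠ 0 by omega, show (j : ℕ) - 1 + 1 = j by omega]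

theorem transMatrix_mem_colStochastic (ha : a ∈ Set.Icc (0 : ℝ) 1) (hq : ∀ i, 0 ≤ q i)
    (hqsum : ∑ i, q i = 1) : transMatrix m a q ∈ colStochastic ℝ (Fin m) :=
  mem_colStochastic_iff_sum.2 ⟨transMatrix_nonneg ha.1 ha.2 hq, sum_transMatrix_apply hqsum⟩

theorem transMatrix_mulVec (hm : 0 < m) (f : Fin m → ℝ) (i : Fin m) :
    (transMatrix m a q *ᵥ f) i = q i * (1 - a) * f ⟨0, hm⟩ + a * f i
      + if h : (i : ℕ) + 1 < m then (1 - a) * f ⟨i + 1, h⟩ else 0 := by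
  simp only [mulVec, dotProduct, transMatrix, add_mul, ite_mul, zero_mul,
    Finset.sum_add_distrib]
  congr 1
  · rw [Finset.sum_eq_single_of_mem ⟨0, hm⟩ (Finset.mem_univ _)
      fun j _ hj => if_neg fun h => hj (Fin.ext h)]
    simp
  · split_ifs with h
    · rw [Finset.sum_eq_single_of_mem ⟨i + 1, h⟩ (Finset.mem_univ _)
        fun j _ hj => if_neg fun h' => hj (Fin.ext h')]
      simp
    · exact Finset.sum_eq_zero fun j _ => if_neg fun h' => h (by have := j.isLt; omega)

theorem tailQ_zero (hm : 0 < m) (hqsum : ∑ i, q i = 1) : tailQ m q ⟨0, hm⟩ = 1 := by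
  rw [tailQ, ← hqsum]
  exact Finset.sum_congr
    (Finset.eq_univ_of_forall fun j => Finset.mem_Ici.2 (Fin.le_def.2 (Nat.zero_le _)))
    fun _ _ => rfl

theorem tailQ_eq_add (s : Fin m) :
    tailQ m q s = q s + if h : (s : ℕ) + 1 < m then tailQ m q ⟨s + 1, h⟩ else 0 := by
  rw [tailQ, ← Finset.Ioi_insert, Finset.sum_insert (by simp)]
  split_ifs with h
  · have : Finset.Ioi s = Finset.Ici ⟨s + 1, h⟩ := by
      ext j
      simp only [Finset.mem_Ioi, Finset.mem_Ici, Fin.lt_def, Fin.le_def]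
      omega
    rw [this, tailQ]
  · rw [add_zero, add_eq_left]
    exact Finset.sum_eq_zero fun j hj => absurd (Fin.lt_def.1 (Finset.mem_Ioi.1 hj))
      (by have := j.isLt; omega)

theorem transMatrix_mulVec_tailQ (hm : 0 < m) (hqsum : ∑ i, q i = 1) :
    transMatrix m a q *ᵥ tailQ m q = tailQ m q := by
  funext i
  rw [transMatrix_mulVec hm, tailQ_zero hm hqsum, tailQ_eq_add i]
  split_ifs <;> ring

theorem le_transMatrix_self (ha₁ : a ≤ 1) (hq : ∀ i, 0 ≤ q i) (i : Fin m) :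
    a ≤ transMatrix m a q i i := by
  have := mul_nonneg (hq i) (sub_nonneg.2 ha₁)
  simp only [transMatrix, if_true, if_neg (Nat.succ_ne_self _).symm]
  split_ifs <;> linarith

theorem transMatrix_apply_of_val_eq_succ {i j : Fin m} (h : (j : ℕ) = i + 1) :
    transMatrix m a q i j = 1 - a := by
  simp [transMatrix, h, Fin.ext_iff]

/-- Row `0` of `A ^ k` dominates `min a (1 - a) ^ k` on the levels `j ≤ k`: stay put, with
weight `a`, until the level `j` is due, then climb one level per step, with weight `1 - a`. -/
theorem min_pow_le_pow_transMatrix_apply (hm : 0 < m) (ha : a ∈ Set.Icc (0 : ℝ) 1)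
    (hq : ∀ i, 0 ≤ q i) (hqsum : ∑ i, q i = 1) {k : ℕ} {j : Fin m} (hj : (j : ℕ) ≤ k) :
    min a (1 - a) ^ k ≤ (transMatrix m a q ^ k) ⟨0, hm⟩ j := by
  have hA := transMatrix_mem_colStochastic ha hq hqsum
  have hA₀ : ∀ i j, 0 ≤ transMatrix m a q i j := fun _ _ => nonneg_of_mem_colStochastic hA
  have hc : 0 ≤ min a (1 - a) := le_min ha.1 (sub_nonneg.2 ha.2)
  induction k generalizing j with
  | zero => simp [show j = ⟨0, hm⟩ from Fin.ext (Nat.le_zero.1 hj)]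
  | succ k ih =>
    have hAk : ∀ i j, 0 ≤ (transMatrix m a q ^ k) i j := fun _ _ =>
      nonneg_of_mem_colStochastic (pow_mem hA k)
    rw [pow_succ]
    rcases Nat.lt_or_ge (j : ℕ) (k + 1) with hjk | hjk
    · calc min a (1 - a) ^ (k + 1)
          ≤ (transMatrix m a q ^ k) ⟨0, hm⟩ j * transMatrix m a q j j :=
            mul_le_mul (ih (by omega)) ((min_le_left _ _).trans (le_transMatrix_self ha.2 hq j))
              hc (hAk _ _)
        _ ≤ _ := mul_apply_le_of_nonneg hAk hA₀ _ _ _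
    · have hkm : k < m := by omega
      calc min a (1 - a) ^ (k + 1)
          ≤ (transMatrix m a q ^ k) ⟨0, hm⟩ ⟨k, hkm⟩ * transMatrix m a q ⟨k, hkm⟩ j :=
            mul_le_mul (ih le_rfl) ((min_le_right _ _).trans
              (transMatrix_apply_of_val_eq_succ (by simp; omega)).ge) hc (hAk _ _)
        _ ≤ _ := mul_apply_le_of_nonneg hAk hA₀ _ _ _

end TransMatrix

/-- If `q_m > 0`, the stationary distribution `f_∞` is a global attractor of
the dynamics `f_{t+1} = A f_t` on the simplex: for every probability vector
`f₀`, `A^t f₀ → f_∞` as `t → ∞`. -/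
theorem stmt7 (m : ℕ) (hm : 1 ≤ m) (a : ℝ) (ha : a ∈ Set.Ioo (0 : ℝ) 1)
    (q : Fin m → ℝ) (hq : ∀ i, q i ∈ Set.Icc (0 : ℝ) 1) (hqsum : ∑ i, q i = 1) :
    ∀ f₀ : Fin m → ℝ, (∀ i, 0 ≤ f₀ i) → ∑ i, f₀ i = 1 →
      Filter.Tendsto (fun t : ℕ => ((transMatrix m a q) ^ t).mulVec f₀)
        Filter.atTop (nhds (fun s => tailQ m q s / ∑ s', tailQ m q s')) := by
  intro f₀ _ hf₀sum
  have ha' : a ∈ Set.Icc (0 : ℝ) 1 := Set.Ioo_subset_Icc_self ha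
  have hq₀ : ∀ i, 0 ≤ q i := fun i => (hq i).1
  have hZ : 0 < ∑ s, tailQ m q s :=
    Finset.sum_pos' (fun s _ => Finset.sum_nonneg fun j _ => hq₀ j)
      ⟨⟨0, hm⟩, Finset.mem_univ _, (tailQ_zero hm hqsum).symm ▸ one_pos⟩
  refine Matrix.tendsto_pow_mulVec_of_mem_colStochastic
    (transMatrix_mem_colStochastic ha' hq₀ hqsum) (pow_pos (lt_min ha.1 (sub_pos.2 ha.2)) m)
    (fun j => min_pow_le_pow_transMatrix_apply hm ha' hq₀ hqsum j.isLt.le) ?_ ?_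
  · have hx : (fun s => tailQ m q s / ∑ s', tailQ m q s') =
        (∑ s, tailQ m q s)⁻¹ • tailQ m q := by
      ext s; simp [div_eq_inv_mul]
    rw [hx, Matrix.mulVec_smul, transMatrix_mulVec_tailQ hm hqsum]
  · rw [hf₀sum, ← Finset.sum_div, div_self hZ.ne']
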